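/- Let Y be an integrable real random variable, X a random variable with the conditional distribution of Y given X continuous a.s., α ∈ (0,1), θ_2* = F_{Y|X}^{-1}(α), and ψ_α(y,θ) = (y-θ)(α - 1_{y≤θ}). Then E[ψ_α(Y; θ_2*)] = (1-α)(E[Y | Y > θ_2*] - E[Y]). -/

import Mathlib

/-!
Write `B = {θ₂ < Y}`. The pinball loss splits as `ψ_α(y, θ) = (α - 1)(y - θ) + 1_{θ < y} (y - θ)`.
Since `θ₂` is `σ(X)`-measurable and `P(B | X) = 1 - α`, the pull-out property of conditional
expectation gives `E[θ₂ 1_B] = (1 - α) E[θ₂]` and `P(B) = 1 - α`; the `θ₂`-terms then cancel and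
`E[ψ_α(Y; θ₂)] = E[Y 1_B] - (1 - α) E[Y] = (1 - α)(E[Y | B] - E[Y])`.
-/

open MeasureTheory ProbabilityTheory Real Set Filter

/-- Generalized inverse (quantile function): `F⁻¹(α) = inf {y : F(y) ≥ α}`. -/
noncomputable def quantileFun {Ω : Type*} [MeasurableSpace Ω] (μ : Measure Ω)
    (Y : Ω → ℝ) (α : ℝ) : ℝ :=
  sInf {y : ℝ | α ≤ (μ {ω | Y ω ≤ y}).toReal}

/-- The α-quantile contrast (pinball) function `ψ_α(y, θ) = (y-θ)(α - 1_{y≤θ})`. -/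
noncomputable def psi (α y θ : ℝ) : ℝ := (y - θ) * (α - if y ≤ θ then 1 else 0)

/-- Conditional Tail Expectation: `E[Y | Y > F_Y⁻¹(α)]`. -/
noncomputable def CTE {Ω : Type*} [MeasurableSpace Ω] (μ : Measure Ω)
    (Y : Ω → ℝ) (α : ℝ) : ℝ :=
  (∫ ω in {ω | quantileFun μ Y α < Y ω}, Y ω ∂μ) /
    (μ {ω | quantileFun μ Y α < Y ω}).toReal

theorem psi_eq_add_ite (α y θ : ℝ) :
    psi α y θ = (α - 1) * (y - θ) + if θ < y then y - θ else 0 := by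
  unfold psi
  split_ifs <;> linarith

theorem integral_psi {Ω : Type*} {mΩ : MeasurableSpace Ω} {μ : Measure Ω} {Y θ : Ω → ℝ}
    (hY : Integrable Y μ) (hθ : Integrable θ μ) (α : ℝ) :
    ∫ ω, psi α (Y ω) (θ ω) ∂μ
      = (α - 1) * (∫ ω, Y ω ∂μ - ∫ ω, θ ω ∂μ)
        + (∫ ω in {ω | θ ω < Y ω}, Y ω ∂μ - ∫ ω in {ω | θ ω < Y ω}, θ ω ∂μ) := by
  have hB : NullMeasurableSet {ω | θ ω < Y ω} μ :=
    nullMeasurableSet_lt hθ.aemeasurable hY.aemeasurable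
  have hsplit : (fun ω => psi α (Y ω) (θ ω))
      = fun ω => (α - 1) * (Y ω - θ ω) + {ω | θ ω < Y ω}.indicator (Y - θ) ω := by
    ext ω
    rw [psi_eq_add_ite]
    rfl
  have hlin : Integrable (fun ω => (α - 1) * (Y ω - θ ω)) μ := (hY.sub hθ).const_mul _
  rw [hsplit, integral_add hlin ((hY.sub hθ).indicator₀ hB), integral_const_mul,
    integral_sub hY hθ, integral_indicator₀ hB, Pi.sub_def,
    integral_sub hY.integrableOn hθ.integrableOn]

section CondExpConst

variable {Ω : Type*} {m mΩ : MeasurableSpace Ω} {μ : Measure Ω}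

theorem integral_mul_eq_mul_integral_of_condExp_ae_eq_const (hm : m ≤ mΩ)
    [SigmaFinite (μ.trim hm)] {f g : Ω → ℝ} (hg : StronglyMeasurable[m] g)
    (hgf : Integrable (g * f) μ) (hf : Integrable f μ) {c : ℝ}
    (hc : μ[f | m] =ᵐ[μ] fun _ => c) :
    ∫ ω, g ω * f ω ∂μ = c * ∫ ω, g ω ∂μ := by
  calc ∫ ω, g ω * f ω ∂μ = ∫ ω, (μ[g * f | m]) ω ∂μ := (integral_condExp hm).symm
    _ = ∫ ω, g ω * c ∂μ := by
        refine integral_congr_ae ?_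
        filter_upwards [condExp_mul_of_stronglyMeasurable_left hg hgf hf, hc] with ω hpull hcω
        rw [hpull, Pi.mul_apply, hcω]
    _ = c * ∫ ω, g ω ∂μ := by rw [integral_mul_const, mul_comm]

theorem setIntegral_eq_mul_integral_of_condExp_indicator_ae_eq_const [IsFiniteMeasure μ]
    (hm : m ≤ mΩ) {s : Set Ω} (hs : NullMeasurableSet s μ) {g : Ω → ℝ}
    (hg : StronglyMeasurable[m] g) (hgi : Integrable g μ) {c : ℝ}
    (hc : μ[s.indicator (fun _ => (1 : ℝ)) | m] =ᵐ[μ] fun _ => c) :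
    ∫ ω in s, g ω ∂μ = c * ∫ ω, g ω ∂μ := by
  have hgs : g * s.indicator (fun _ => (1 : ℝ)) = s.indicator g := by
    ext ω
    by_cases hω : ω ∈ s <;> simp [hω]
  rw [← integral_mul_eq_mul_integral_of_condExp_ae_eq_const hm hg
      (hgs ▸ hgi.indicator₀ hs) ((integrable_const 1).indicator₀ hs) hc,
    ← integral_indicator₀ hs]
  simp only [← Pi.mul_apply, hgs]

theorem measureReal_eq_of_condExp_indicator_ae_eq_const [IsProbabilityMeasure μ]
    (hm : m ≤ mΩ) {s : Set Ω} (hs : NullMeasurableSet s μ) {c : ℝ}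
    (hc : μ[s.indicator (fun _ => (1 : ℝ)) | m] =ᵐ[μ] fun _ => c) :
    μ.real s = c := by
  have h := setIntegral_eq_mul_integral_of_condExp_indicator_ae_eq_const hm hs
    stronglyMeasurable_const (integrable_const (1 : ℝ)) hc
  simpa using h

theorem condExp_indicator_compl_ae_eq_const [IsFiniteMeasure μ] (hm : m ≤ mΩ)
    {s : Set Ω} (hs : NullMeasurableSet s μ) {c : ℝ}
    (hc : μ[s.indicator (fun _ => (1 : ℝ)) | m] =ᵐ[μ] fun _ => c) :
    μ[sᶜ.indicator (fun _ => (1 : ℝ)) | m] =ᵐ[μ] fun _ => 1 - c := by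
  rw [indicator_compl]
  have hone : Integrable (fun _ => (1 : ℝ)) μ := integrable_const 1
  filter_upwards [condExp_sub hone (hone.indicator₀ hs) m, hc] with ω hsub hcω
  rw [hsub, Pi.sub_apply, condExp_const hm, hcω]

end CondExpConst

/-- `E[ψ_α(Y; θ₂*)] = (1-α)(E[Y | Y > θ₂*] - E[Y])` where `θ₂*` is the
`σ(X)`-measurable conditional α-quantile (`m` plays the role of `σ(X)`). -/
theorem contrast_at_cond_quantile {Ω : Type*} [mΩ : MeasurableSpace Ω]
    (μ : Measure Ω) [IsProbabilityMeasure μ]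
    (m : MeasurableSpace Ω) (hm : m ≤ mΩ)
    (Y θ₂ : Ω → ℝ) (hθ₂ : StronglyMeasurable[m] θ₂)
    (hYint : Integrable Y μ) (hθ₂int : Integrable θ₂ μ)
    (α : ℝ) (hα : α ∈ Set.Ioo (0 : ℝ) 1)
    (hcond : ∀ᵐ ω ∂μ,
      (μ[Set.indicator {ω' | Y ω' ≤ θ₂ ω'} (fun _ => (1 : ℝ)) | m]) ω = α) :
    ∫ ω, psi α (Y ω) (θ₂ ω) ∂μ
      = (1 - α) *
        ((∫ ω in {ω | θ₂ ω < Y ω}, Y ω ∂μ) / (μ {ω | θ₂ ω < Y ω}).toReal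
          - ∫ ω, Y ω ∂μ) := by
  have hA := nullMeasurableSet_le hYint.aemeasurable hθ₂int.aemeasurable
  have htail : {ω | Y ω ≤ θ₂ ω}ᶜ = {ω | θ₂ ω < Y ω} := by
    ext ω
    simp
  have hB := htail ▸ hA.compl
  have hcondB := htail ▸ condExp_indicator_compl_ae_eq_const hm hA hcond
  have hμB := measureReal_eq_of_condExp_indicator_ae_eq_const hm hB hcondB
  have hθB :=
    setIntegral_eq_mul_integral_of_condExp_indicator_ae_eq_const hm hB hθ₂ hθ₂int hcondB
  have hα1 : 1 - α ≠ 0 := (sub_pos.2 hα.2).ne'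
  rw [Measure.real] at hμB
  rw [integral_psi hYint hθ₂int, hμB, hθB]
  field_simp
  ring
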